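/- arXiv:1610.01871 — 2 statements merged into one kernel-verified Lean document; each statement's English description precedes it below -/
import Mathlib

section
/- Let X be a real Hilbert space, A : X → 2^X maximally monotone, x ∈ X with 0 ∉ A(x), λ > 0, and ν > 0. Then there exists r > 0 such that for every η ∈ X with ‖η‖ < r there exists a unique y ∈ X satisfying η ∈ λA(y) + y − x and ‖η‖ ≤ ν‖y − x‖; moreover y = (I + λA)⁻¹(x + η). -/
open RealInnerProductSpace

section Minty
variable {X : Type*} [NormedAddCommGroup X] [InnerProductSpace ℝ X]

private lemma combo_norm_sq (a b : X) (t : ℝ) :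
    ‖(1-t)•a + t•b‖^2 = (1-t)*‖a‖^2 + t*‖b‖^2 - t*(1-t)*‖a-b‖^2 := by
  have h : ∀ u : X, ‖u‖^2 = ⟪u,u⟫ := fun u => (real_inner_self_eq_norm_sq u).symm
  simp only [h]
  simp only [inner_add_left, inner_add_right, inner_sub_left, inner_sub_right,
    real_inner_smul_left, real_inner_smul_right]
  rw [real_inner_comm b a]
  ring

/-- The Fitzpatrick-type integrand. -/
private noncomputable def mphi (q p : X × X) : ℝ :=
  ⟪p.2, q.1⟫ + ⟪q.2, p.1⟫ - ⟪q.2, q.1⟫ + (‖p.1‖^2 + ‖p.2‖^2)/2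

private lemma mphi_key (q p : X × X) :
    ⟪p.1, p.2⟫ + (‖p.1‖^2 + ‖p.2‖^2)/2 - mphi q p = ⟪p.2 - q.2, p.1 - q.1⟫ := by
  simp only [mphi, inner_sub_left, inner_sub_right]
  rw [real_inner_comm p.1 p.2]
  ring

private lemma mphi_combo (q p1 p2 : X × X) (t : ℝ) :
    mphi q ((1-t)•p1.1 + t•p2.1, (1-t)•p1.2 + t•p2.2)
      = (1-t)*mphi q p1 + t*mphi q p2
        - t*(1-t)/2*(‖p1.1-p2.1‖^2 + ‖p1.2-p2.2‖^2) := by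
  simp only [mphi]
  rw [combo_norm_sq, combo_norm_sq]
  simp only [inner_add_left, inner_add_right, real_inner_smul_left, real_inner_smul_right]
  ring

private lemma mphi_cont (q : X × X) : Continuous (fun p : X × X => mphi q p) :=
  (((continuous_snd.inner continuous_const).add (continuous_const.inner continuous_fst)).sub
      continuous_const).add
    (((continuous_fst.norm.pow 2).add (continuous_snd.norm.pow 2)).div_const 2)

private lemma half_sq (p : X × X) :
    ⟪p.1, p.2⟫ + (‖p.1‖^2 + ‖p.2‖^2)/2 = ‖p.1 + p.2‖^2/2 := by
  have h : ∀ u : X, ‖u‖^2 = ⟪u,u⟫ := fun u => (real_inner_self_eq_norm_sq u).symm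
  simp only [h, inner_add_left, inner_add_right]
  rw [real_inner_comm p.2 p.1]
  ring

variable [CompleteSpace X]

set_option maxHeartbeats 2000000 in
private theorem minty_zero (B : X → Set X)
    (hmono : ∀ x1 x2 u1 u2, u1 ∈ B x1 → u2 ∈ B x2 → 0 ≤ ⟪u1 - u2, x1 - x2⟫)
    (hmax : ∀ y v, (∀ x u, u ∈ B x → 0 ≤ ⟪v - u, y - x⟫) → v ∈ B y) :
    ∃ y b, b ∈ B y ∧ y + b = 0 := by
  classical
  set S : Set (X × X) := {q | q.2 ∈ B q.1} with hSdef
  have hSne : S.Nonempty := by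
    by_contra hemp
    rw [Set.not_nonempty_iff_eq_empty] at hemp
    have h0 : (0:X) ∈ B 0 := hmax 0 0 (by
      intro x u hu
      exact absurd (show (x,u) ∈ S from hu) (by simp [hemp]))
    exact absurd (show ((0:X),(0:X)) ∈ S from h0) (by simp [hemp])
  set E : X × X → Set ℝ := fun p => (fun q => mphi q p) '' S with hEdef
  have hEne : ∀ p, (E p).Nonempty := fun p => hSne.image _
  set D : Set (X × X) := {p | BddAbove (E p)} with hDdef
  set h : X × X → ℝ := fun p => sSup (E p) with hhdef
  have hle_h : ∀ p ∈ D, ∀ q ∈ S, mphi q p ≤ h p := by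
    intro p hp q hq
    exact le_csSup hp ⟨q, hq, rfl⟩
  have hSD : ∀ q ∈ S, q ∈ D ∧ h q ≤ ⟪q.1, q.2⟫ + (‖q.1‖^2 + ‖q.2‖^2)/2 := by
    intro q hq
    have hub : ∀ r ∈ E q, r ≤ ⟪q.1, q.2⟫ + (‖q.1‖^2 + ‖q.2‖^2)/2 := by
      rintro r ⟨q', hq', rfl⟩
      have h1 := hmono q.1 q'.1 q.2 q'.2 hq hq'
      have hk := mphi_key q' q
      simp only
      linarith
    exact ⟨⟨_, fun r hr => hub r hr⟩, csSup_le (hEne q) hub⟩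
  have hlow : ∀ p ∈ D, ⟪p.1, p.2⟫ + (‖p.1‖^2 + ‖p.2‖^2)/2 ≤ h p := by
    intro p hp
    by_contra hlt
    push_neg at hlt
    have hpS : p ∈ S := by
      refine hmax p.1 p.2 ?_
      intro x u hu
      have h1 : mphi (x,u) p ≤ h p := hle_h p hp (x,u) hu
      have hk := mphi_key (x,u) p
      simp only at hk
      linarith
    have h2 := hle_h p hp p hpS
    have hk := mphi_key p p
    simp only [sub_self, inner_zero_left] at hk
    linarith
  have hnonneg : ∀ p ∈ D, 0 ≤ h p := by
    intro p hp
    have h1 := hlow p hp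
    rw [half_sq] at h1
    have h2 : (0:ℝ) ≤ ‖p.1 + p.2‖^2/2 := by positivity
    linarith
  have hcombo : ∀ p1 ∈ D, ∀ p2 ∈ D, ∀ t : ℝ, 0 ≤ t → t ≤ 1 →
      (((1-t)•p1.1 + t•p2.1, (1-t)•p1.2 + t•p2.2) : X × X) ∈ D ∧
      h ((1-t)•p1.1 + t•p2.1, (1-t)•p1.2 + t•p2.2)
        ≤ (1-t)*h p1 + t*h p2 - t*(1-t)/2*(‖p1.1-p2.1‖^2 + ‖p1.2-p2.2‖^2) := by
    intro p1 hp1 p2 hp2 t ht0 ht1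
    have hub : ∀ r ∈ E ((1-t)•p1.1 + t•p2.1, (1-t)•p1.2 + t•p2.2),
        r ≤ (1-t)*h p1 + t*h p2 - t*(1-t)/2*(‖p1.1-p2.1‖^2 + ‖p1.2-p2.2‖^2) := by
      rintro r ⟨q, hq, rfl⟩
      show mphi q _ ≤ _
      rw [mphi_combo]
      have h1 := hle_h p1 hp1 q hq
      have h2 := hle_h p2 hp2 q hq
      nlinarith [h1, h2]
    exact ⟨⟨_, fun r hr => hub r hr⟩, csSup_le (hEne _) hub⟩
  set m : ℝ := sInf (h '' D) with hmdef
  have hDne : D.Nonempty := ⟨hSne.some, (hSD hSne.some hSne.some_mem).1⟩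
  have hbdd : BddBelow (h '' D) := ⟨0, by rintro r ⟨p, hp, rfl⟩; exact hnonneg p hp⟩
  have hm_le : ∀ p ∈ D, m ≤ h p := fun p hp => csInf_le hbdd ⟨p, hp, rfl⟩
  have hseq : ∀ n : ℕ, ∃ p ∈ D, h p < m + (1/2)^n := by
    intro n
    have hlt : m < m + (1/2:ℝ)^n := by
      have : (0:ℝ) < (1/2:ℝ)^n := by positivity
      linarith
    obtain ⟨r, ⟨p, hp, rfl⟩, hr⟩ := exists_lt_of_csInf_lt (hDne.image h) hlt
    exact ⟨p, hp, hr⟩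
  choose p hpD hph using hseq
  have hcau : ∀ n k : ℕ, ‖(p n).1-(p k).1‖^2 + ‖(p n).2-(p k).2‖^2
      ≤ 4*((1/2)^n + (1/2)^k) := by
    intro n k
    obtain ⟨hmidD, hmid⟩ := hcombo (p n) (hpD n) (p k) (hpD k) (1/2) (by norm_num) (by norm_num)
    have h1 := hm_le _ hmidD
    have h2 := hph n
    have h3 := hph k
    nlinarith
  have hcauchy : CauchySeq p := by
    apply cauchySeq_of_le_tendsto_0 (fun N => Real.sqrt (8 * (1/2)^N))
    · intro n k N hn hk
      have hbN : ∀ u v : X, ‖u - v‖^2 ≤ 8 * (1/2:ℝ)^N → dist u v ≤ Real.sqrt (8 * (1/2)^N) := by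
        intro u v huv
        rw [dist_eq_norm, ← Real.sqrt_sq (norm_nonneg (u - v))]
        exact Real.sqrt_le_sqrt huv
      have hpow : ∀ j : ℕ, N ≤ j → ((1:ℝ)/2)^j ≤ (1/2)^N := fun j hj =>
        pow_le_pow_of_le_one (by norm_num) (by norm_num) hj
      have hc := hcau n k
      have h1 := hpow n hn
      have h2 := hpow k hk
      have hs1 : ‖(p n).1-(p k).1‖^2 ≤ 8 * (1/2:ℝ)^N := by nlinarith [sq_nonneg ‖(p n).2-(p k).2‖]
      have hs2 : ‖(p n).2-(p k).2‖^2 ≤ 8 * (1/2:ℝ)^N := by nlinarith [sq_nonneg ‖(p n).1-(p k).1‖]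
      rw [Prod.dist_eq]
      exact max_le (hbN _ _ hs1) (hbN _ _ hs2)
    · have h1 : Filter.Tendsto (fun N : ℕ => 8 * (1/2:ℝ)^N) Filter.atTop (nhds 0) := by
        have := tendsto_pow_atTop_nhds_zero_of_lt_one (by norm_num : (0:ℝ) ≤ 1/2) (by norm_num)
        simpa using this.const_mul 8
      have h2 := (Real.continuous_sqrt.tendsto 0).comp h1
      simpa only [Function.comp_def, Real.sqrt_zero] using h2
  obtain ⟨P, hP⟩ := cauchySeq_tendsto_of_complete hcauchy
  have hgen : ∀ q ∈ S, mphi q P ≤ m := by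
    intro q hq
    have h1 : Filter.Tendsto (fun n => mphi q (p n)) Filter.atTop (nhds (mphi q P)) :=
      ((mphi_cont q).tendsto P).comp hP
    have h2 : Filter.Tendsto (fun n : ℕ => m + (1/2:ℝ)^n) Filter.atTop (nhds m) := by
      have := tendsto_pow_atTop_nhds_zero_of_lt_one (by norm_num : (0:ℝ) ≤ 1/2) (by norm_num)
      simpa using tendsto_const_nhds.add this
    exact le_of_tendsto_of_tendsto' h1 h2
      (fun n => (hle_h _ (hpD n) q hq).trans (hph n).le)
  have hPD : P ∈ D := ⟨m, by rintro r ⟨q, hq, rfl⟩; exact hgen q hq⟩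
  have hhP : h P ≤ m := csSup_le (hEne P) (by rintro r ⟨q, hq, rfl⟩; exact hgen q hq)
  have hstar : ∀ q ∈ S,
      m + (‖P.1-q.1‖^2 + ‖P.2-q.2‖^2)/2 ≤ ⟪q.1, q.2⟫ + (‖q.1‖^2 + ‖q.2‖^2)/2 := by
    intro q hq
    obtain ⟨hqD, hub⟩ := hSD q hq
    set dsq : ℝ := ‖P.1-q.1‖^2 + ‖P.2-q.2‖^2 with hdsq
    have hkey : ∀ t : ℝ, 0 < t → t ≤ 1 → m + (1-t)/2 * dsq ≤ h q := by
      intro t ht0 ht1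
      obtain ⟨hptD, hpt⟩ := hcombo P hPD q hqD t ht0.le ht1
      have h1 := hm_le _ hptD
      nlinarith [h1, hpt, hhP]
    have hq_ge : m + dsq/2 ≤ h q := by
      by_contra hc
      push_neg at hc
      have hd0 : 0 ≤ dsq := by positivity
      have hmq : m ≤ h q := hm_le q hqD
      rcases eq_or_lt_of_le hd0 with he | hlt
      · have h1 := hkey 1 one_pos le_rfl
        rw [← he] at hc
        norm_num at h1 hc
        linarith
      · set t : ℝ := (m + dsq/2 - h q)/dsq with htdef
        have ht0 : 0 < t := div_pos (by linarith) hlt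
        have ht1 : t ≤ 1 := by rw [div_le_one hlt]; linarith
        have h1 := hkey t ht0 ht1
        have htd : t * dsq = m + dsq/2 - h q := div_mul_cancel₀ _ hlt.ne'
        nlinarith
    linarith
  have hPlow : ⟪P.1, P.2⟫ + (‖P.1‖^2 + ‖P.2‖^2)/2 ≤ m := (hlow P hPD).trans hhP
  have hrel : (-P.1) ∈ B (-P.2) := by
    apply hmax
    intro x u hu
    have hst := hstar (x,u) hu
    simp only at hst
    have e1 : ⟪-P.1 - u, -P.2 - x⟫
        = ⟪P.1, P.2⟫ + ⟪P.1, x⟫ + ⟪u, P.2⟫ + ⟪u, x⟫ := by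
      simp only [inner_sub_left, inner_sub_right, inner_neg_left, inner_neg_right]
      ring
    have e2 := norm_sub_sq_real P.1 x
    have e3 := norm_sub_sq_real P.2 u
    have e4 := norm_add_sq_real P.1 P.2
    have e5 : (0:ℝ) ≤ ‖P.1 + P.2‖^2 := by positivity
    have e6 := real_inner_comm x u
    have e7 := real_inner_comm u P.2
    rw [e1]
    nlinarith [hst, hPlow, e2, e3, e4, e5, e6, e7]
  have hst2 := hstar (-P.2, -P.1) hrel
  simp only at hst2
  have f1 : ⟪-P.2, -P.1⟫ = ⟪P.1, P.2⟫ := by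
    rw [inner_neg_neg, real_inner_comm]
  have f2 : ‖P.1 - -P.2‖ = ‖P.1 + P.2‖ := by rw [sub_neg_eq_add]
  have f3 : ‖P.2 - -P.1‖ = ‖P.1 + P.2‖ := by rw [sub_neg_eq_add, add_comm]
  have f4 : ‖(-P.2 : X)‖ = ‖P.2‖ := norm_neg _
  have f5 : ‖(-P.1 : X)‖ = ‖P.1‖ := norm_neg _
  rw [f1, f2, f3, f4, f5] at hst2
  have hzero : P.1 + P.2 = 0 := by
    have h1 : ‖P.1 + P.2‖^2 ≤ 0 := by nlinarith [hPlow, hst2]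
    have h2 : ‖P.1 + P.2‖ = 0 := by nlinarith [norm_nonneg (P.1 + P.2)]
    exact norm_eq_zero.mp h2
  exact ⟨-P.2, -P.1, hrel, by rw [← neg_add, add_comm]; simp [hzero]⟩

private theorem minty_surj (B : X → Set X)
    (hmono : ∀ x1 x2 u1 u2, u1 ∈ B x1 → u2 ∈ B x2 → 0 ≤ ⟪u1 - u2, x1 - x2⟫)
    (hmax : ∀ y v, (∀ x u, u ∈ B x → 0 ≤ ⟪v - u, y - x⟫) → v ∈ B y) (z : X) :
    ∃ y b, b ∈ B y ∧ y + b = z := by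
  set w : X := (1/2 : ℝ) • z with hwdef
  have hww : w + w = z := by
    rw [hwdef, ← add_smul]; norm_num
  set C : X → Set X := fun u => {c | c + w ∈ B (u + w)} with hCdef
  have hmono' : ∀ x1 x2 u1 u2, u1 ∈ C x1 → u2 ∈ C x2 → 0 ≤ ⟪u1 - u2, x1 - x2⟫ := by
    intro x1 x2 u1 u2 h1 h2
    have := hmono (x1+w) (x2+w) (u1+w) (u2+w) h1 h2
    simpa using this
  have hmax' : ∀ y v, (∀ x u, u ∈ C x → 0 ≤ ⟪v - u, y - x⟫) → v ∈ C y := by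
    intro y v hv
    show v + w ∈ B (y + w)
    apply hmax
    intro x u hu
    have hmem : (u - w) ∈ C (x - w) := by
      show (u - w) + w ∈ B ((x - w) + w)
      rw [sub_add_cancel, sub_add_cancel]
      exact hu
    have h1 := hv (x - w) (u - w) hmem
    have e1 : v - (u - w) = v + w - u := by abel
    have e2 : y - (x - w) = y + w - x := by abel
    rw [e1, e2] at h1
    exact h1
  obtain ⟨y, b, hb, hyb⟩ := minty_zero C hmono' hmax'
  refine ⟨y + w, b + w, hb, ?_⟩
  have : y + w + (b + w) = (y + b) + (w + w) := by abel
  rw [this, hyb, hww, zero_add]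

end Minty


/-- (Well-definedness of the iterative step of the
Iusem–Pennanen–Svaiter inexact proximal method.) If `0 ∉ A(x)`, `λ > 0` and
`ν > 0`, then there is `r > 0` such that for every `η` with `‖η‖ < r` there is
a unique `y` with `η ∈ λA(y) + y − x` and `‖η‖ ≤ ν‖y − x‖`; moreover
`y = (I + λA)⁻¹(x + η)`, i.e. `x + η = y + λa` for the witness `a ∈ A(y)`. -/
theorem iusem_pennanen_svaiter_step_well_defined
    {X : Type*} [NormedAddCommGroup X] [InnerProductSpace ℝ X] [CompleteSpace X]
    (A : X → Set X)
    (hmono : ∀ x1 x2 u1 u2, u1 ∈ A x1 → u2 ∈ A x2 → 0 ≤ ⟪u1 - u2, x1 - x2⟫)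
    (hmax : ∀ y v, (∀ x u, u ∈ A x → 0 ≤ ⟪v - u, y - x⟫) → v ∈ A y)
    (x : X) (hx : 0 ∉ A x) (lam ν : ℝ) (hlam : 0 < lam) (hν : 0 < ν) :
    ∃ r > 0, ∀ η : X, ‖η‖ < r →
      (∃! y : X, (∃ a ∈ A y, η = lam • a + y - x) ∧ ‖η‖ ≤ ν * ‖y - x‖) ∧
      (∀ y, (∃ a ∈ A y, η = lam • a + y - x) →
        ∃ a ∈ A y, x + η = y + lam • a) := by
  classical
  set B : X → Set X := fun y => {b | ∃ a ∈ A y, b = lam • a} with hBdef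
  have hmono' : ∀ x1 x2 u1 u2, u1 ∈ B x1 → u2 ∈ B x2 → 0 ≤ ⟪u1 - u2, x1 - x2⟫ := by
    rintro x1 x2 u1 u2 ⟨a1, ha1, rfl⟩ ⟨a2, ha2, rfl⟩
    rw [← smul_sub, real_inner_smul_left]
    exact mul_nonneg hlam.le (hmono x1 x2 a1 a2 ha1 ha2)
  have hmax' : ∀ y v, (∀ x u, u ∈ B x → 0 ≤ ⟪v - u, y - x⟫) → v ∈ B y := by
    intro y v hv
    refine ⟨lam⁻¹ • v, ?_, (smul_inv_smul₀ hlam.ne' v).symm⟩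
    apply hmax
    intro x' u hu
    have h1 := hv x' (lam • u) ⟨u, hu, rfl⟩
    have e : lam⁻¹ • v - u = lam⁻¹ • (v - lam • u) := by
      rw [smul_sub, inv_smul_smul₀ hlam.ne']
    rw [e, real_inner_smul_left]
    exact mul_nonneg (by positivity) h1
  have surj := minty_surj B hmono' hmax'
  -- nonexpansiveness of the resolvent
  have hnexp : ∀ y1 y2 a1 a2 : X, a1 ∈ A y1 → a2 ∈ A y2 →
      ‖y1 - y2‖ ≤ ‖(y1 + lam • a1) - (y2 + lam • a2)‖ := by
    intro y1 y2 a1 a2 ha1 ha2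
    have hm := hmono y1 y2 a1 a2 ha1 ha2
    have he : (y1 + lam • a1) - (y2 + lam • a2) = (y1 - y2) + lam • (a1 - a2) := by
      rw [smul_sub]; abel
    have hq : ‖(y1 + lam • a1) - (y2 + lam • a2)‖^2
        = ‖y1 - y2‖^2 + 2*(lam * ⟪a1 - a2, y1 - y2⟫) + ‖lam • (a1 - a2)‖^2 := by
      rw [he, norm_add_sq_real, real_inner_smul_right, real_inner_comm]
    have h2 : ‖y1 - y2‖^2 ≤ ‖(y1 + lam • a1) - (y2 + lam • a2)‖^2 := by
      nlinarith [sq_nonneg ‖lam • (a1 - a2)‖]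
    exact (pow_le_pow_iff_left₀ (norm_nonneg _) (norm_nonneg _) (by norm_num)).mp h2
  -- the resolvent of x
  obtain ⟨y₀, b₀, ⟨a₀, ha₀, rfl⟩, hy₀⟩ := surj x
  have hy₀x : y₀ ≠ x := by
    rintro rfl
    have h0 : lam • a₀ = 0 := by
      have := hy₀
      nth_rewrite 2 [← add_zero y₀] at this
      exact add_left_cancel this
    have ha0 : a₀ = 0 := by
      rcases smul_eq_zero.mp h0 with h | h
      · exact absurd h hlam.ne'
      · exact h
    rw [ha0] at ha₀
    exact hx ha₀
  have hd : 0 < ‖y₀ - x‖ := by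
    rw [norm_pos_iff, sub_ne_zero]
    exact hy₀x
  refine ⟨ν * ‖y₀ - x‖ / (1 + ν), by positivity, ?_⟩
  intro η hη
  have hη' : ‖η‖ * (1 + ν) < ν * ‖y₀ - x‖ := by
    rw [div_eq_mul_inv] at hη
    calc ‖η‖ * (1 + ν) < (ν * ‖y₀ - x‖ * (1+ν)⁻¹) * (1+ν) := by
          apply mul_lt_mul_of_pos_right hη (by positivity)
      _ = ν * ‖y₀ - x‖ := by field_simp
  constructor
  · obtain ⟨y, b, ⟨a, ha, rfl⟩, hy⟩ := surj (x + η)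
    have hne : ‖y - y₀‖ ≤ ‖η‖ := by
      have h1 := hnexp y y₀ a a₀ ha ha₀
      rw [hy, hy₀] at h1
      simpa using h1
    have hyx : ‖y₀ - x‖ - ‖η‖ ≤ ‖y - x‖ := by
      have h1 : ‖y₀ - x‖ ≤ ‖y₀ - y‖ + ‖y - x‖ := by
        calc ‖y₀ - x‖ = ‖(y₀ - y) + (y - x)‖ := by rw [sub_add_sub_cancel]
          _ ≤ ‖y₀ - y‖ + ‖y - x‖ := norm_add_le _ _
      rw [norm_sub_rev y₀ y] at h1
      linarith
    have hnorm : ‖η‖ ≤ ν * ‖y - x‖ := by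
      nlinarith [norm_nonneg η]
    have hkey : η = lam • a + y - x := by
      have h := hy.symm
      rw [eq_sub_iff_add_eq, add_comm η x, h]
      abel
    refine ⟨y, ⟨⟨a, ha, hkey⟩, hnorm⟩, ?_⟩
    rintro y' ⟨⟨a', ha', he'⟩, -⟩
    have hsum : y' + lam • a' = y + lam • a := by
      rw [hy, he']; abel
    have hm := hmono y' y a' a ha' ha
    have e : y' - y = lam • (a - a') := by
      rw [smul_sub]
      calc y' - y = (y' + lam • a') - (y + lam • a') := by abel
        _ = (y + lam • a) - (y + lam • a') := by rw [hsum]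
        _ = lam • a - lam • a' := by abel
    have haa : a' = a := by
      rw [e, real_inner_smul_right] at hm
      have e2 : ⟪a' - a, a - a'⟫ = -‖a' - a‖^2 := by
        rw [show a - a' = -(a' - a) by abel, inner_neg_right, real_inner_self_eq_norm_sq]
      rw [e2] at hm
      have : ‖a' - a‖^2 ≤ 0 := by nlinarith
      have h3 : ‖a' - a‖ = 0 := by nlinarith [norm_nonneg (a' - a)]
      rw [← sub_eq_zero]
      exact norm_eq_zero.mp h3
    have : y' - y = 0 := by rw [e, haa, sub_self, smul_zero]
    rw [← sub_eq_zero]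
    exact this
  · rintro y ⟨a, ha, he⟩
    exact ⟨a, ha, by rw [he]; abel⟩
end

section
/- Let X be a real reflexive Banach space, f : X → ℝ fully Legendre, A : X → 2^{X*} maximally monotone, and λ > 0 such that (∇f + λA)⁻¹ is single-valued and continuous and ∇f is continuous. For each (x, η) ∈ X × X*, let (ỹ(x,η), ξ̃(x,η)) denote the unique solution of ξ ∈ A(y), η = ξ + (1/λ)(∇f(y) − ∇f(x)). Then the maps (x,η) ↦ ỹ(x,η) and (x,η) ↦ ξ̃(x,η) are continuous, given explicitly by ỹ(x,η) = (∇f + λA)⁻¹(λη + ∇f(x)) and ξ̃(x,η) = η − (1/λ)(∇f(ỹ(x,η)) − ∇f(x)). -/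
/-! Multiplying the second equation by `λ` turns the inclusion problem into
`λη + ∇f(x) ∈ (∇f + λA)(y)`, so single-valuedness of `R = (∇f + λA)⁻¹` forces
`y = R(λη + ∇f(x))`, and the equation then determines `ξ`. Continuity of both
solution maps is that of compositions of `R`, `∇f` and linear operations. -/

theorem eq_add_inv_smul_sub_iff_smul_add_eq {K E : Type*} [Field K] [AddCommGroup E]
    [Module K E] {c : K} (hc : c ≠ 0) {a b ξ η : E} :
    η = ξ + c⁻¹ • (b - a) ↔ c • η + a = b + c • ξ := by
  rw [← (smul_right_injective E hc).eq_iff, smul_add, smul_inv_smul₀ hc]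
  constructor <;> intro h
  · rw [h]; abel
  · rw [← sub_eq_iff_eq_add'] at h ⊢
    rw [← h]; abel

theorem mem_and_eq_iff_eq_resolvent {K X E : Type*} [Field K] [AddCommGroup E] [Module K E]
    {A : X → Set E} {g : X → E} {lam : K} {R : E → X}
    (hR : ∀ w y, (∃ a ∈ A y, w = g y + lam • a) ↔ y = R w)
    (hlam : lam ≠ 0) {x y : X} {η ξ : E} :
    ξ ∈ A y ∧ η = ξ + lam⁻¹ • (g y - g x) ↔
      y = R (lam • η + g x) ∧ ξ = η - lam⁻¹ • (g (R (lam • η + g x)) - g x) := by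
  constructor
  · rintro ⟨hξ, hη⟩
    have hy : y = R (lam • η + g x) :=
      (hR _ _).mp ⟨ξ, hξ, (eq_add_inv_smul_sub_iff_smul_add_eq hlam).mp hη⟩
    exact ⟨hy, by rw [← hy, eq_sub_iff_add_eq, ← hη]⟩
  · rintro ⟨rfl, rfl⟩
    obtain ⟨a, ha, hw⟩ := (hR (lam • η + g x) _).mpr rfl
    have hξ := eq_sub_of_add_eq ((eq_add_inv_smul_sub_iff_smul_add_eq hlam).mpr hw).symm
    exact ⟨hξ ▸ ha, (sub_add_cancel _ _).symm⟩

theorem inexact_resolvent_solution_continuous_dependence_general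
    {X : Type*} [NormedAddCommGroup X] [NormedSpace ℝ X]
    (g : X → StrongDual ℝ X)
    (hgcont : Continuous g)
    (A : X → Set (StrongDual ℝ X))
    (lam : ℝ) (hlam : 0 < lam)
    (R : StrongDual ℝ X → X)
    (hR : ∀ w y, (∃ a ∈ A y, w = g y + lam • a) ↔ y = R w)
    (hRcont : Continuous R)
    (ytil : X × StrongDual ℝ X → X)
    (hytil : ∀ p, ytil p = R (lam • p.2 + g p.1))
    (xitil : X × StrongDual ℝ X → StrongDual ℝ X)
    (hxitil : ∀ p, xitil p = p.2 - lam⁻¹ • (g (ytil p) - g p.1)) :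
    Continuous ytil ∧ Continuous xitil ∧
    (∀ x η, xitil (x, η) ∈ A (ytil (x, η)) ∧
      η = xitil (x, η) + lam⁻¹ • (g (ytil (x, η)) - g x)) ∧
    (∀ x η y ξ, ξ ∈ A y → η = ξ + lam⁻¹ • (g y - g x) →
      y = ytil (x, η) ∧ ξ = xitil (x, η)) := by
  have hycont : Continuous ytil := by rw [funext hytil]; fun_prop
  have hxcont : Continuous xitil := by rw [funext hxitil]; fun_prop
  have hsol : ∀ x η y ξ, ξ ∈ A y ∧ η = ξ + lam⁻¹ • (g y - g x) ↔
      y = ytil (x, η) ∧ ξ = xitil (x, η) := by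
    intro x η y ξ
    rw [hxitil, hytil]
    exact mem_and_eq_iff_eq_resolvent hR hlam.ne'
  exact ⟨hycont, hxcont, fun x η => (hsol x η _ _).mpr ⟨rfl, rfl⟩,
    fun x η y ξ hξ hη => (hsol x η y ξ).mp ⟨hξ, hη⟩⟩

/-- (Continuous dependence on the data of the inexact
resolvent inclusion problem.) Let `X` be a real reflexive Banach space,
`f : X → ℝ` fully Legendre with `∇f = g` continuous, `A` maximally monotone,
`λ > 0`, and suppose `(∇f + λA)⁻¹ = R` is single-valued and continuous. Then
the unique solution `(ỹ(x,η), ξ̃(x,η))` of `ξ ∈ A(y)`,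
`η = ξ + (1/λ)(∇f(y) − ∇f(x))` is given by `ỹ(x,η) = R(λη + ∇f(x))`,
`ξ̃(x,η) = η − (1/λ)(∇f(ỹ) − ∇f(x))`, and both maps are continuous in
`(x, η)`. -/
theorem inexact_resolvent_solution_continuous_dependence
    {X : Type*} [NormedAddCommGroup X] [NormedSpace ℝ X] [CompleteSpace X]
    (hrefl : Function.Surjective (NormedSpace.inclusionInDoubleDual ℝ X))
    (f : X → ℝ) (hconv : ConvexOn ℝ Set.univ f) (hlsc : LowerSemicontinuous f)
    (g : X → StrongDual ℝ X)
    (hg : ∀ x v, HasLineDerivAt ℝ f (g x v) x v)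
    (hgcont : Continuous g)
    (fstar : StrongDual ℝ X → ℝ)
    (hfstar : ∀ p, IsLUB (Set.range fun x => p x - f x) (fstar p))
    (gstar : StrongDual ℝ X → X)
    (hgstar : ∀ p q, HasLineDerivAt ℝ fstar (q (gstar p)) p q)
    (A : X → Set (StrongDual ℝ X))
    (hmono : ∀ x1 x2 u1 u2, u1 ∈ A x1 → u2 ∈ A x2 → 0 ≤ (u1 - u2) (x1 - x2))
    (hmax : ∀ y v, (∀ x u, u ∈ A x → 0 ≤ (v - u) (y - x)) → v ∈ A y)
    (lam : ℝ) (hlam : 0 < lam)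
    (R : StrongDual ℝ X → X)
    (hR : ∀ w y, (∃ a ∈ A y, w = g y + lam • a) ↔ y = R w)
    (hRcont : Continuous R)
    (ytil : X × StrongDual ℝ X → X)
    (hytil : ∀ p, ytil p = R (lam • p.2 + g p.1))
    (xitil : X × StrongDual ℝ X → StrongDual ℝ X)
    (hxitil : ∀ p, xitil p = p.2 - lam⁻¹ • (g (ytil p) - g p.1)) :
    Continuous ytil ∧ Continuous xitil ∧
    (∀ x η, xitil (x, η) ∈ A (ytil (x, η)) ∧
      η = xitil (x, η) + lam⁻¹ • (g (ytil (x, η)) - g x)) ∧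
    (∀ x η y ξ, ξ ∈ A y → η = ξ + lam⁻¹ • (g y - g x) →
      y = ytil (x, η) ∧ ξ = xitil (x, η)) :=
  inexact_resolvent_solution_continuous_dependence_general g hgcont A lam hlam R hR hRcont ytil
    hytil xitil hxitil
end
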